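/- In the masked diffusion case (π = 𝐦 constant, q_t(z|x) = α_t 𝐱_z + (1-α_t)𝐦_z, model distribution q_t(z|θ) = α_t θ_z + (1-α_t)𝐦_z where θ is a probability vector over the non-mask tokens with θ_m = 0), the sum D_KL(q_t(·|x) ‖ q_t(·|θ)) + D_IS(q_t(m|x) ‖ q_t(m|θ)) equals -α_t log θ_x, for x ≠ m, α_t ∈ (0,1), and θ_x > 0. -/
import Mathlib


theorem mdm_kl_plus_is
    {V : Type*} [Fintype V] [DecidableEq V]
    (m x : V) (hmx : m ≠ x)
    (αt : ℝ) (hα : αt ∈ Set.Ioo (0:ℝ) 1)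
    (θ : V → ℝ) (hθ0 : ∀ z, 0 ≤ θ z) (hθ1 : ∑ z, θ z = 1)
    (hθm : θ m = 0) (hθx : 0 < θ x)
    (qx qθ : V → ℝ)
    (hqx : ∀ z, qx z = αt * (if z = x then (1:ℝ) else 0)
        + (1 - αt) * (if z = m then (1:ℝ) else 0))
    (hqθ : ∀ z, qθ z = αt * θ z + (1 - αt) * (if z = m then (1:ℝ) else 0)) :
    (∑ z, qx z * Real.log (qx z / qθ z))
      + (qx m / qθ m - Real.log (qx m / qθ m) - 1)
    = -(αt * Real.log (θ x)) := by
  obtain ⟨hα0, hα1⟩ := hα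
  have hαne : αt ≠ 0 := ne_of_gt hα0
  have h1α : (1 : ℝ) - αt ≠ 0 := by linarith
  have hqxm : qx m = 1 - αt := by rw [hqx]; simp [hmx, hmx.symm]
  have hqθm : qθ m = 1 - αt := by rw [hqθ]; simp [hθm]
  have hqxx : qx x = αt := by rw [hqx]; simp [hmx.symm]
  have hqθx : qθ x = αt * θ x := by rw [hqθ]; simp [hmx.symm]
  have hsum : (∑ z, qx z * Real.log (qx z / qθ z))
      = qx x * Real.log (qx x / qθ x) + qx m * Real.log (qx m / qθ m) := by
    refine Finset.sum_eq_add_of_mem x m (Finset.mem_univ x) (Finset.mem_univ m)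
      hmx.symm ?_
    intro z _ hz
    have : qx z = 0 := by rw [hqx]; simp [hz.1, hz.2]
    simp [this]
  rw [hsum, hqxm, hqθm, hqxx, hqθx]
  have hx : αt / (αt * θ x) = 1 / θ x := by
    field_simp
  rw [hx, div_self h1α, Real.log_one, one_div, Real.log_inv]
  ring
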